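/- arXiv:2112.02986 — 9 statements merged into one kernel-verified Lean document; each statement's English description precedes it below -/
import Mathlib

section
/- (Core algebraic step in the prevention of checkerboard modes.) Assume the data are at relaxation equilibrium, i.e. v^L = u^L, v^R = u^R, and suppose that the intermediate specific volumes coincide with the initial ones: τ^{L*} = τ^L and τ^{R*} = τ^R. Then v^L = v^R, u^{L*} = u^L, u^{R*} = u^R, v* = u^L = u^R, π^{L*} = π^L, π^{R*} = π^R, and the pressures satisfy the discrete hydrostatic relation π^L − π^R = ρ̄·(Z^R − Z^L). In particular the velocity is constant across the interface and, when Z^L = Z^R, also the pressure is constant across the interface, so no checkerboard mode in velocity and pressure can persist. -/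
/-- Core algebraic step in the prevention of checkerboard modes: if the data are at
relaxation equilibrium (`v^L = u^L`, `v^R = u^R`) and the intermediate specific volumes
coincide with the initial ones (`τ^{L*} = τ^L`, `τ^{R*} = τ^R`), then
`v^L = v^R`, `u^{L*} = u^L`, `u^{R*} = u^R`, `v* = u^L = u^R`, `π^{L*} = π^L`,
`π^{R*} = π^R`, and `π^L − π^R = ρ̄·(Z^R − Z^L)`; in particular, if `Z^L = Z^R` then
also `π^L = π^R`, so no checkerboard mode in velocity and pressure can persist. -/
theorem checkerboard_core
    (M aL aR bL bR rhoL rhoR vL vR uL uR piL piR ZL ZR rbar : ℝ)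
    (hM : 0 < M) (haL : 0 < aL) (haR : 0 < aR) (hbL : 0 < bL) (hbR : 0 < bR)
    (hrhoL : 0 < rhoL) (hrhoR : 0 < rhoR)
    (tauL tauR : ℝ) (htauL : tauL = 1 / rhoL) (htauR : tauR = 1 / rhoR)
    (vstar tauLs tauRs uLs uRs piLs piRs : ℝ)
    (hvstar : vstar = (M * bL * vL + M * bR * vR + piL - piR - rbar * (ZR - ZL))
        / (M * (bL + bR)))
    (htauLs : tauLs = tauL + (M * bR * (vR - vL) + piL - piR - rbar * (ZR - ZL))
        / (aL * (bL + bR)))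
    (htauRs : tauRs = tauR + (M * bL * (vR - vL) + piR - piL + rbar * (ZR - ZL))
        / (aR * (bL + bR)))
    (huLs : uLs = uL + bL * (M * bR * (vR - vL) + piL - piR - rbar * (ZR - ZL))
        / (M * aL * (bL + bR)))
    (huRs : uRs = uR + bR * (M * bL * (vL - vR) + piL - piR - rbar * (ZR - ZL))
        / (M * aR * (bL + bR)))
    (hpiLs : piLs = (bR * piL + bL * piR + M * bL * bR * (vL - vR)
        + bL * rbar * (ZR - ZL)) / (bL + bR))
    (hpiRs : piRs = (bR * piL + bL * piR + M * bL * bR * (vL - vR)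
        - bR * rbar * (ZR - ZL)) / (bL + bR))
    (heqL : vL = uL) (heqR : vR = uR)
    (hfixL : tauLs = tauL) (hfixR : tauRs = tauR) :
    vL = vR ∧ uLs = uL ∧ uRs = uR ∧ vstar = uL ∧ vstar = uR ∧
    piLs = piL ∧ piRs = piR ∧ piL - piR = rbar * (ZR - ZL) ∧
    (ZL = ZR → piL = piR) := by
  have hb : bL + bR ≠ 0 := by positivity
  have hA : M * bR * (vR - vL) + piL - piR - rbar * (ZR - ZL) = 0 := by
    rw [htauLs] at hfixL
    have h0 : (M * bR * (vR - vL) + piL - piR - rbar * (ZR - ZL)) / (aL * (bL + bR)) = 0 := by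
      linarith
    exact (div_eq_zero_iff.mp h0).resolve_right (by positivity)
  have hB : M * bL * (vR - vL) + piR - piL + rbar * (ZR - ZL) = 0 := by
    rw [htauRs] at hfixR
    have h0 : (M * bL * (vR - vL) + piR - piL + rbar * (ZR - ZL)) / (aR * (bL + bR)) = 0 := by
      linarith
    exact (div_eq_zero_iff.mp h0).resolve_right (by positivity)
  have hv : vL = vR := by
    have hsum : M * (bL + bR) * (vR - vL) = 0 := by nlinarith
    have hMb : M * (bL + bR) ≠ 0 := by positivity
    have := mul_eq_zero.mp hsum
    rcases this with h | h
    · exact absurd h hMb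
    · linarith [sub_eq_zero.mp h]
  have hpi : piL - piR = rbar * (ZR - ZL) := by nlinarith
  subst hv heqL
  have hMb : M * (bL + bR) ≠ 0 := by positivity
  refine ⟨rfl, ?_, ?_, ?_, ?_, ?_, ?_, hpi, ?_⟩
  · rw [huLs]; field_simp; linear_combination bL * hpi
  · rw [huRs, heqR]; field_simp; linear_combination bR * hpi
  · rw [hvstar, div_eq_iff hMb]; linarith [hpi]
  · rw [hvstar, heqR, div_eq_iff hMb]; linarith [hpi]
  · rw [hpiLs, div_eq_iff hb]; linear_combination (-bL) * hpi
  · rw [hpiRs, div_eq_iff hb]; linear_combination bR * hpi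
  · intro h; rw [h] at hpi; simp at hpi; linarith
end

section
/- (Well-balanced property of the full scheme, Theorem 4.) Suppose u_i = 0 for all i ∈ ℤ and the discrete hydrostatic equilibrium p_{i+1} − p_i + ρ̄_{i+1/2}·(Φ_{i+1} − Φ_i) = 0 holds at every interface. Then the Godunov update leaves the data unchanged: ω_i^{n+1} = ω_i^n for all i ∈ ℤ, i.e. the updated density, momentum and total energy equal the initial ones. -/
/-- Sign function with the convention `sgn 0 = 1`. -/
noncomputable def sgn (x : ℝ) : ℝ := if x < 0 then -1 else 1

/-- Data at one interface of the scheme: Mach number, relaxation speeds, the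
`ρ̄`-average, and the left/right cell data (density, internal energy, pressure,
velocity, gravitational potential), initialized at relaxation equilibrium
(`v = u`, `π = p`, `Z = Φ`). -/
structure IFace where
  M : ℝ
  aL : ℝ
  aR : ℝ
  bL : ℝ
  bR : ℝ
  rbar : ℝ
  rhoL : ℝ
  eL : ℝ
  pL : ℝ
  uL : ℝ
  PhiL : ℝ
  rhoR : ℝ
  eR : ℝ
  pR : ℝ
  uR : ℝ
  PhiR : ℝ

namespace IFace

variable (d : IFace)

/-- Intermediate velocity `v*`. -/
noncomputable def vstar : ℝ :=
  (d.M * d.bL * d.uL + d.M * d.bR * d.uR + d.pL - d.pR - d.rbar * (d.PhiR - d.PhiL))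
    / (d.M * (d.bL + d.bR))

/-- Intermediate specific volume `τ^{L*}`. -/
noncomputable def tauLs : ℝ :=
  1 / d.rhoL + (d.M * d.bR * (d.uR - d.uL) + d.pL - d.pR - d.rbar * (d.PhiR - d.PhiL))
    / (d.aL * (d.bL + d.bR))

/-- Intermediate specific volume `τ^{R*}`. -/
noncomputable def tauRs : ℝ :=
  1 / d.rhoR + (d.M * d.bL * (d.uR - d.uL) + d.pR - d.pL + d.rbar * (d.PhiR - d.PhiL))
    / (d.aR * (d.bL + d.bR))

/-- Intermediate velocity `u^{L*}`. -/
noncomputable def uLs : ℝ :=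
  d.uL + d.bL * (d.M * d.bR * (d.uR - d.uL) + d.pL - d.pR - d.rbar * (d.PhiR - d.PhiL))
    / (d.M * d.aL * (d.bL + d.bR))

/-- Intermediate velocity `u^{R*}`. -/
noncomputable def uRs : ℝ :=
  d.uR + d.bR * (d.M * d.bL * (d.uL - d.uR) + d.pL - d.pR - d.rbar * (d.PhiR - d.PhiL))
    / (d.M * d.aR * (d.bL + d.bR))

/-- Intermediate pressure `π^{L*}`. -/
noncomputable def piLs : ℝ :=
  (d.bR * d.pL + d.bL * d.pR + d.M * d.bL * d.bR * (d.uL - d.uR)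
    + d.bL * d.rbar * (d.PhiR - d.PhiL)) / (d.bL + d.bR)

/-- Intermediate pressure `π^{R*}`. -/
noncomputable def piRs : ℝ :=
  (d.bR * d.pL + d.bL * d.pR + d.M * d.bL * d.bR * (d.uL - d.uR)
    - d.bR * d.rbar * (d.PhiR - d.PhiL)) / (d.bL + d.bR)

/-- Intermediate internal energy `e^{L*}`. -/
noncomputable def eLs : ℝ :=
  d.eL + (d.piLs ^ 2 - d.pL ^ 2) / (2 * d.aL * d.bL)
    + ((d.vstar - d.uLs) ^ 2 - (d.uL - d.uL) ^ 2) / (2 * (d.aL / d.bL - 1))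

/-- Intermediate internal energy `e^{R*}`. -/
noncomputable def eRs : ℝ :=
  d.eR + (d.piRs ^ 2 - d.pR ^ 2) / (2 * d.aR * d.bR)
    + ((d.vstar - d.uRs) ^ 2 - (d.uR - d.uR) ^ 2) / (2 * (d.aR / d.bR - 1))

/-- Left wave speed `σ⁻ = v^L − a^L/(M·ρ^L)`. -/
noncomputable def sigm : ℝ := d.uL - d.aL / (d.M * d.rhoL)

/-- Right wave speed `σ⁺ = v^R + a^R/(M·ρ^R)`. -/
noncomputable def sigp : ℝ := d.uR + d.aR / (d.M * d.rhoR)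

/-- Intermediate densities and total energies. -/
noncomputable def rhoLs : ℝ := 1 / d.tauLs
noncomputable def rhoRs : ℝ := 1 / d.tauRs
noncomputable def ELs : ℝ := d.rhoLs * d.eLs + (1 / 2) * d.M ^ 2 * d.rhoLs * d.uLs ^ 2
noncomputable def ERs : ℝ := d.rhoRs * d.eRs + (1 / 2) * d.M ^ 2 * d.rhoRs * d.uRs ^ 2

/-- Total energies of the adjacent cells. -/
noncomputable def EL : ℝ := d.rhoL * d.eL + (1 / 2) * d.M ^ 2 * d.rhoL * d.uL ^ 2
noncomputable def ER : ℝ := d.rhoR * d.eR + (1 / 2) * d.M ^ 2 * d.rhoR * d.uR ^ 2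

/-- The Godunov numerical flux of the two-speed relaxation scheme. -/
noncomputable def flux : ℝ × ℝ × ℝ :=
  if 0 < d.sigm then
    (d.rhoL * d.uL, d.rhoL * d.uL ^ 2 + d.pL / d.M ^ 2, (d.EL + d.pL) * d.uL)
  else if 0 ≤ d.vstar then
    (d.rhoLs * d.vstar, d.rhoLs * d.uLs * d.vstar + d.piLs / d.M ^ 2,
      (d.ELs + d.piLs) * d.vstar)
  else if 0 < d.sigp then
    (d.rhoRs * d.vstar, d.rhoRs * d.uRs * d.vstar + d.piRs / d.M ^ 2,
      (d.ERs + d.piRs) * d.vstar)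
  else
    (d.rhoR * d.uR, d.rhoR * d.uR ^ 2 + d.pR / d.M ^ 2, (d.ER + d.pR) * d.uR)

/-- Numerical source term `S⁺ = −(sgn(v*) + 1)·(0, ρ̄/M², ρ̄·v*)`. -/
noncomputable def srcP : ℝ × ℝ × ℝ :=
  (-(sgn d.vstar + 1)) • ((0 : ℝ), d.rbar / d.M ^ 2, d.rbar * d.vstar)

/-- Numerical source term `S⁻ = (sgn(v*) − 1)·(0, ρ̄/M², ρ̄·v*)`. -/
noncomputable def srcM : ℝ × ℝ × ℝ :=
  (sgn d.vstar - 1) • ((0 : ℝ), d.rbar / d.M ^ 2, d.rbar * d.vstar)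

end IFace

/-! At rest, the hydrostatic balance `p^R − p^L + ρ̄·(Φ^R − Φ^L) = 0` makes `v* = 0` and
`π^{L*} = p^L` at every interface, so the numerical flux reduces to the pressure flux
`(0, p_i/M², 0)` of the left cell, `S⁻` vanishes and `S⁺ = (0, −2ρ̄/M², 0)`. In the update of
cell `i` the pressure difference `p_i − p_{i−1}` is then cancelled exactly by the source term
`ρ̄_{i−1/2}·(Φ_i − Φ_{i−1})`; this is the discrete balance at interface `i − 1/2`. -/

theorem sgn_zero : sgn 0 = 1 := if_neg (lt_irrefl 0)

namespace IFace

structure IsHydrostatic (d : IFace) : Prop where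
  uL_eq_zero : d.uL = 0
  uR_eq_zero : d.uR = 0
  balance : d.pR - d.pL + d.rbar * (d.PhiR - d.PhiL) = 0

namespace IsHydrostatic

variable {d : IFace} (h : d.IsHydrostatic)
include h

theorem vstar_eq_zero : d.vstar = 0 := by
  have hnum : d.M * d.bL * d.uL + d.M * d.bR * d.uR + d.pL - d.pR
      - d.rbar * (d.PhiR - d.PhiL) = 0 := by
    rw [h.uL_eq_zero, h.uR_eq_zero]
    linear_combination -h.balance
  rw [vstar, hnum, zero_div]

theorem piLs_eq_pL (hb : d.bL + d.bR ≠ 0) : d.piLs = d.pL := by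
  rw [piLs, div_eq_iff hb, h.uL_eq_zero, h.uR_eq_zero]
  linear_combination d.bL * h.balance

theorem flux_eq (hb : d.bL + d.bR ≠ 0) : d.flux = (0, d.pL / d.M ^ 2, 0) := by
  have hv := h.vstar_eq_zero
  unfold flux
  split_ifs with _ hvnonneg
  · simp [h.uL_eq_zero]
  · simp [hv, h.piLs_eq_pL hb]
  · exact absurd hv.ge hvnonneg
  · exact absurd hv.ge hvnonneg

theorem srcP_eq : d.srcP = (0, -2 * (d.rbar / d.M ^ 2), 0) := by
  simp only [srcP, h.vstar_eq_zero, sgn_zero, Prod.smul_mk, smul_eq_mul]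
  norm_num

theorem srcM_eq : d.srcM = 0 := by
  simp only [srcM, h.vstar_eq_zero, sgn_zero, sub_self, zero_smul]

end IsHydrostatic

end IFace

theorem scheme_well_balanced_general
    (dx dt M : ℝ)
    (rho e p u Phi : ℤ → ℝ) (aL aR bL bR rbar : ℤ → ℝ)
    (hbL : ∀ i, 0 < bL i) (hbR : ∀ i, 0 < bR i)
    (D : ℤ → IFace)
    (hD : ∀ i, D i = ⟨M, aL i, aR i, bL i, bR i, rbar i,
        rho i, e i, p i, u i, Phi i,
        rho (i + 1), e (i + 1), p (i + 1), u (i + 1), Phi (i + 1)⟩)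
    (omega : ℤ → ℝ × ℝ × ℝ)
    (hu0 : ∀ i, u i = 0)
    (hhydro : ∀ i, p (i + 1) - p i + rbar i * (Phi (i + 1) - Phi i) = 0) :
    ∀ i : ℤ,
      omega i - (dt / dx) • ((D i).flux - (D (i - 1)).flux)
        + (dt / 2) • (((Phi i - Phi (i - 1)) / dx) • (D (i - 1)).srcP
          + ((Phi (i + 1) - Phi i) / dx) • (D i).srcM)
      = omega i := by
  have hrest : ∀ j, (D j).IsHydrostatic := fun j => by
    rw [hD j]; exact ⟨hu0 j, hu0 (j + 1), hhydro j⟩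
  have hflux : ∀ j, (D j).flux = (0, p j / M ^ 2, 0) := fun j => by
    rw [(hrest j).flux_eq (by rw [hD j]; exact (add_pos (hbL j) (hbR j)).ne'), hD j]
  have hsrcP : ∀ j, (D j).srcP = (0, -2 * (rbar j / M ^ 2), 0) := fun j => by
    rw [(hrest j).srcP_eq, hD j]
  intro i
  have hbalance := hhydro (i - 1)
  rw [sub_add_cancel] at hbalance
  rw [hflux i, hflux (i - 1), hsrcP (i - 1), (hrest i).srcM_eq]
  ext
  · simp
  · simp only [Prod.snd_add, Prod.snd_sub, Prod.fst_add, Prod.fst_sub, Prod.smul_snd,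
      Prod.smul_fst, Prod.snd_zero, Prod.fst_zero, smul_eq_mul]
    linear_combination (-(dt / dx) / M ^ 2) * hbalance
  · simp

/-- Well-balanced property of the full scheme (Theorem 4): if the velocities vanish in
every cell and the discrete hydrostatic equilibrium
`p_{i+1} − p_i + ρ̄_{i+1/2}·(Φ_{i+1} − Φ_i) = 0` holds at every interface, then the
Godunov update leaves the data `ω_i = (ρ_i, ρ_i·u_i, E_i)` unchanged. -/
theorem scheme_well_balanced
    (dx dt M : ℝ) (hdx : 0 < dx) (hdt : 0 < dt) (hM : 0 < M)
    (rho e p u Phi : ℤ → ℝ) (aL aR bL bR rbar : ℤ → ℝ)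
    (hrho : ∀ i, 0 < rho i) (he : ∀ i, 0 < e i) (hp : ∀ i, 0 < p i)
    (haL : ∀ i, 0 < aL i) (haR : ∀ i, 0 < aR i)
    (hbL : ∀ i, 0 < bL i) (hbR : ∀ i, 0 < bR i)
    (habL : ∀ i, aL i > bL i) (habR : ∀ i, aR i > bR i)
    (D : ℤ → IFace)
    (hD : ∀ i, D i = ⟨M, aL i, aR i, bL i, bR i, rbar i,
        rho i, e i, p i, u i, Phi i,
        rho (i + 1), e (i + 1), p (i + 1), u (i + 1), Phi (i + 1)⟩)
    (htauLs : ∀ i, 0 < (D i).tauLs) (htauRs : ∀ i, 0 < (D i).tauRs)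
    (omega : ℤ → ℝ × ℝ × ℝ)
    (homega : ∀ i, omega i = (rho i, rho i * u i,
        rho i * e i + (1 / 2) * M ^ 2 * rho i * (u i) ^ 2))
    (hu0 : ∀ i, u i = 0)
    (hhydro : ∀ i, p (i + 1) - p i + rbar i * (Phi (i + 1) - Phi i) = 0) :
    ∀ i : ℤ,
      omega i - (dt / dx) • ((D i).flux - (D (i - 1)).flux)
        + (dt / 2) • (((Phi i - Phi (i - 1)) / dx) • (D (i - 1)).srcP
          + ((Phi (i + 1) - Phi i) / dx) • (D i).srcM)
      = omega i :=
  scheme_well_balanced_general dx dt M rho e p u Phi aL aR bL bR rbar hbL hbR D hD omega hu0 hhydro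
end

section
/- (Conservation of the Riemann invariants I_1^± across the outer waves.) The intermediate states satisfy v^L − a^L·τ^L/M = v* − a^L·τ^{L*}/M (constancy of v − a/(M·ρ) across the left wave) and v^R + a^R·τ^R/M = v* + a^R·τ^{R*}/M (constancy of v + a/(M·ρ) across the right wave). -/
/-- Conservation of the Riemann invariants `I₁^±` across the outer waves:
`v^L − a^L·τ^L/M = v* − a^L·τ^{L*}/M` and `v^R + a^R·τ^R/M = v* + a^R·τ^{R*}/M`. -/
theorem riemann_invariant_I1
    (M aL aR bL bR rhoL rhoR vL vR piL piR ZL ZR rbar : ℝ)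
    (hM : 0 < M) (haL : 0 < aL) (haR : 0 < aR) (hbL : 0 < bL) (hbR : 0 < bR)
    (hrhoL : 0 < rhoL) (hrhoR : 0 < rhoR)
    (tauL tauR : ℝ) (htauL : tauL = 1 / rhoL) (htauR : tauR = 1 / rhoR)
    (vstar tauLs tauRs : ℝ)
    (hvstar : vstar = (M * bL * vL + M * bR * vR + piL - piR - rbar * (ZR - ZL))
        / (M * (bL + bR)))
    (htauLs : tauLs = tauL + (M * bR * (vR - vL) + piL - piR - rbar * (ZR - ZL))
        / (aL * (bL + bR)))
    (htauRs : tauRs = tauR + (M * bL * (vR - vL) + piR - piL + rbar * (ZR - ZL))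
        / (aR * (bL + bR))) :
    vL - aL * tauL / M = vstar - aL * tauLs / M ∧
    vR + aR * tauR / M = vstar + aR * tauRs / M := by
  subst hvstar htauLs htauRs
  constructor <;> field_simp <;> ring
end

section
/- (Positivity of the intermediate densities under the wave-ordering condition, Lemma 3.) If the intermediate velocity satisfies v^L − a^L·τ^L/M < v* < v^R + a^R·τ^R/M, then the intermediate specific volumes are positive: τ^{L*} > 0 and τ^{R*} > 0; equivalently, the intermediate densities ρ^{L*} = 1/τ^{L*} and ρ^{R*} = 1/τ^{R*} are positive. -/
/-- Positivity of the intermediate densities under the wave-ordering condition (Lemma 3):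
if `v^L − a^L·τ^L/M < v* < v^R + a^R·τ^R/M`, then `τ^{L*} > 0` and `τ^{R*} > 0`,
i.e. the intermediate densities `ρ^{L*} = 1/τ^{L*}` and `ρ^{R*} = 1/τ^{R*}` are positive. -/
theorem positivity_intermediate_densities
    (M aL aR bL bR rhoL rhoR vL vR piL piR ZL ZR rbar : ℝ)
    (hM : 0 < M) (haL : 0 < aL) (haR : 0 < aR) (hbL : 0 < bL) (hbR : 0 < bR)
    (hrhoL : 0 < rhoL) (hrhoR : 0 < rhoR)
    (tauL tauR : ℝ) (htauL : tauL = 1 / rhoL) (htauR : tauR = 1 / rhoR)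
    (vstar tauLs tauRs : ℝ)
    (hvstar : vstar = (M * bL * vL + M * bR * vR + piL - piR - rbar * (ZR - ZL))
        / (M * (bL + bR)))
    (htauLs : tauLs = tauL + (M * bR * (vR - vL) + piL - piR - rbar * (ZR - ZL))
        / (aL * (bL + bR)))
    (htauRs : tauRs = tauR + (M * bL * (vR - vL) + piR - piL + rbar * (ZR - ZL))
        / (aR * (bL + bR)))
    (hleft : vL - aL * tauL / M < vstar) (hright : vstar < vR + aR * tauR / M) :
    0 < tauLs ∧ 0 < tauRs ∧ 0 < 1 / tauLs ∧ 0 < 1 / tauRs := by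
  have hb : 0 < bL + bR := by linarith
  have htL : 0 < tauL := by rw [htauL]; positivity
  have htR : 0 < tauR := by rw [htauR]; positivity
  have hL : tauLs = tauL + M / aL * (vstar - vL) := by
    rw [htauLs, hvstar]; field_simp; ring
  have hR : tauRs = tauR + M / aR * (vR - vstar) := by
    rw [htauRs, hvstar]; field_simp; ring
  have h1 : 0 < tauLs := by
    rw [hL]
    have e : tauL + M / aL * (vstar - vL) = M / aL * (aL * tauL / M + (vstar - vL)) := by
      field_simp
    rw [e]
    have : 0 < aL * tauL / M + (vstar - vL) := by linarith
    positivity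
  have h2 : 0 < tauRs := by
    rw [hR]
    have e : tauR + M / aR * (vR - vstar) = M / aR * (aR * tauR / M + (vR - vstar)) := by
      field_simp
    rw [e]
    have : 0 < aR * tauR / M + (vR - vstar) := by linarith
    positivity
  exact ⟨h1, h2, by positivity, by positivity⟩
end

section
/- (Positivity of the density under explicit subcharacteristic-type conditions, Lemma 4.) Assume a^L ≥ b^L, a^R ≥ b^R, b^L/ρ^L ≥ a_q^L, b^R/ρ^R ≥ a_q^R, √(a^L·b^L)/ρ^L ≥ c^L·(1 + β·X^L), and √(a^R·b^R)/ρ^R ≥ c^R·(1 + β·X^R). Then the intermediate specific volumes are positive: τ^{L*} > 0 and τ^{R*} > 0, i.e. the approximate Riemann solver preserves the positivity of the density. -/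
/-- One-sided key lemma: under the subcharacteristic-type bound the intermediate
specific volume on one side is positive. -/
lemma key_one_side (M a b b' rho c beta d q N den : ℝ)
    (hM : 0 < M) (ha : 0 < a) (hb : 0 < b) (hb' : 0 < b') (hrho : 0 < rho)
    (hc : 0 < c) (hbeta : 1 ≤ beta)
    (hden : 0 < den) (hdenle : den ≤ b + b')
    (hab : a ≥ b)
    (hN : -(M * b' * max d 0 + max q 0) ≤ N)
    (hsub : Real.sqrt (a * b) / rho
        ≥ c * (1 + beta * ((1 / c) * (M * max d 0 + max q 0 / den)))) :
    0 < 1 / rho + N / (a * (b + b')) := by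
  set D := max d 0 with hD
  set Q := max q 0 with hQ
  have hD0 : 0 ≤ D := le_max_right _ _
  have hQ0 : 0 ≤ Q := le_max_right _ _
  have hS0 : 0 ≤ M * D + Q / den :=
    add_nonneg (mul_nonneg hM.le hD0) (div_nonneg hQ0 hden.le)
  have hcS : c * ((1 / c) * (M * D + Q / den)) = M * D + Q / den := by
    field_simp
  -- sqrt bound
  have hsq : Real.sqrt (a * b) ≤ a := by
    nlinarith [Real.sq_sqrt (mul_nonneg ha.le hb.le), Real.sqrt_nonneg (a * b)]
  have hsqr : Real.sqrt (a * b) / rho ≤ a / rho := by gcongr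
  have f1 : M * D + Q / den ≤ a / rho - c := by
    nlinarith [hsub, hcS, hS0, hbeta, hc]
  have fQ : Q / den * den = Q := div_mul_cancel₀ _ hden.ne'
  have hQd : 0 ≤ Q / den := div_nonneg hQ0 hden.le
  have hbb' : (0:ℝ) < b + b' := add_pos hb hb'
  have hbound : M * b' * D + Q < (b + b') * (a / rho) := by
    nlinarith [mul_le_mul_of_nonneg_left f1 hbb'.le, fQ,
      mul_nonneg (sub_nonneg.mpr hdenle) hQd,
      mul_nonneg (mul_nonneg hM.le hb.le) hD0,
      mul_pos hbb' hc]
  have hA : (0:ℝ) < a * (b + b') := mul_pos ha hbb'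
  have keypos : 0 < (b + b') * (a / rho) + N := by nlinarith
  have hrw : ((b + b') * (a / rho) + N) / (a * (b + b')) = 1 / rho + N / (a * (b + b')) := by
    field_simp
  rw [← hrw]
  exact div_pos keypos hA

/-- Positivity of the density under explicit subcharacteristic-type conditions (Lemma 4):
under `a^L ≥ b^L`, `a^R ≥ b^R`, `b^L/ρ^L ≥ a_q^L`, `b^R/ρ^R ≥ a_q^R`,
`√(a^L·b^L)/ρ^L ≥ c^L·(1+β·X^L)` and `√(a^R·b^R)/ρ^R ≥ c^R·(1+β·X^R)`, the intermediate
specific volumes are positive: `τ^{L*} > 0` and `τ^{R*} > 0`. -/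
theorem positivity_density_subcharacteristic
    (M aL aR bL bR rhoL rhoR vL vR piL piR ZL ZR rbar cL cR aqL aqR beta : ℝ)
    (hM : 0 < M) (haL : 0 < aL) (haR : 0 < aR) (hbL : 0 < bL) (hbR : 0 < bR)
    (hrhoL : 0 < rhoL) (hrhoR : 0 < rhoR)
    (hcL : 0 < cL) (hcR : 0 < cR) (haqL : 0 < aqL) (haqR : 0 < aqR) (hbeta : 1 ≤ beta)
    (tauL tauR : ℝ) (htauL : tauL = 1 / rhoL) (htauR : tauR = 1 / rhoR)
    (tauLs tauRs XL XR : ℝ)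
    (htauLs : tauLs = tauL + (M * bR * (vR - vL) + piL - piR - rbar * (ZR - ZL))
        / (aL * (bL + bR)))
    (htauRs : tauRs = tauR + (M * bL * (vR - vL) + piR - piL + rbar * (ZR - ZL))
        / (aR * (bL + bR)))
    (hXL : XL = (1 / cL) * (M * max (vL - vR) 0
        + max (piR - piL + rbar * (ZR - ZL)) 0 / (rhoL * aqL + rhoR * aqR)))
    (hXR : XR = (1 / cR) * (M * max (vL - vR) 0
        + max (piL - piR + rbar * (ZL - ZR)) 0 / (rhoL * aqL + rhoR * aqR)))
    (hab1 : aL ≥ bL) (hab2 : aR ≥ bR)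
    (hq1 : bL / rhoL ≥ aqL) (hq2 : bR / rhoR ≥ aqR)
    (hsub1 : Real.sqrt (aL * bL) / rhoL ≥ cL * (1 + beta * XL))
    (hsub2 : Real.sqrt (aR * bR) / rhoR ≥ cR * (1 + beta * XR)) :
    0 < tauLs ∧ 0 < tauRs := by
  have hden : 0 < rhoL * aqL + rhoR * aqR :=
    add_pos (mul_pos hrhoL haqL) (mul_pos hrhoR haqR)
  have hdL : rhoL * aqL ≤ bL := by
    have := (div_le_div_iff₀ hrhoL hrhoL).mp (le_refl (bL / rhoL))
    rw [ge_iff_le, le_div_iff₀ hrhoL] at hq1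
    linarith
  have hdR : rhoR * aqR ≤ bR := by
    rw [ge_iff_le, le_div_iff₀ hrhoR] at hq2
    linarith
  rw [hXL] at hsub1
  rw [hXR] at hsub2
  constructor
  · rw [htauLs, htauL]
    exact key_one_side M aL bL bR rhoL cL beta (vL - vR)
      (piR - piL + rbar * (ZR - ZL))
      (M * bR * (vR - vL) + piL - piR - rbar * (ZR - ZL))
      (rhoL * aqL + rhoR * aqR)
      hM haL hbL hbR hrhoL hcL hbeta hden (by linarith) hab1
      (by nlinarith [le_max_left (vL - vR) (0:ℝ),
            le_max_left (piR - piL + rbar * (ZR - ZL)) (0:ℝ),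
            mul_le_mul_of_nonneg_left (le_max_left (vL - vR) (0:ℝ))
              (mul_nonneg hM.le hbR.le)])
      hsub1
  · rw [htauRs, htauR, show aR * (bL + bR) = aR * (bR + bL) from by ring]
    exact key_one_side M aR bR bL rhoR cR beta (vL - vR)
      (piL - piR + rbar * (ZL - ZR))
      (M * bL * (vR - vL) + piR - piL + rbar * (ZR - ZL))
      (rhoL * aqL + rhoR * aqR)
      hM haR hbR hbL hrhoR hcR hbeta hden (by linarith) hab2
      (by nlinarith [le_max_left (vL - vR) (0:ℝ),
            le_max_left (piL - piR + rbar * (ZL - ZR)) (0:ℝ),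
            mul_le_mul_of_nonneg_left (le_max_left (vL - vR) (0:ℝ))
              (mul_nonneg hM.le hbL.le)])
      hsub2
end

section
/- (Preservation of discrete steady states by the Riemann solver, Lemma 6.) Assume the initial data are at relaxation equilibrium with zero velocities, u^L = u^R = 0, v^L = v^R = 0, π^L = p^L, π^R = p^R, Z^L = Φ^L, Z^R = Φ^R, and that the discrete hydrostatic condition p^R − p^L + ρ̄·(Φ^R − Φ^L) = 0 holds. Then the intermediate states coincide with the adjacent initial states: v* = 0, τ^{L*} = τ^L, τ^{R*} = τ^R, u^{L*} = 0, u^{R*} = 0, π^{L*} = p^L, π^{R*} = p^R, e^{L*} = e^L and e^{R*} = e^R; hence the approximate Riemann solver preserves the steady state. -/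
/-- Preservation of discrete steady states by the Riemann solver (Lemma 6): at
relaxation equilibrium with zero velocities and under the discrete hydrostatic
condition `p^R − p^L + ρ̄·(Φ^R − Φ^L) = 0`, the intermediate states coincide with the
adjacent initial states, hence the approximate Riemann solver preserves the steady
state. -/
theorem wb_riemann_solver
    (M aL aR bL bR rhoL rhoR uL uR vL vR pL pR piL piR PhiL PhiR ZL ZR eL eR rbar : ℝ)
    (hM : 0 < M) (haL : 0 < aL) (haR : 0 < aR) (hbL : 0 < bL) (hbR : 0 < bR)
    (habL : aL > bL) (habR : aR > bR)
    (hrhoL : 0 < rhoL) (hrhoR : 0 < rhoR)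
    (tauL tauR : ℝ) (htauL : tauL = 1 / rhoL) (htauR : tauR = 1 / rhoR)
    (vstar tauLs tauRs uLs uRs piLs piRs eLs eRs : ℝ)
    (hvstar : vstar = (M * bL * vL + M * bR * vR + piL - piR - rbar * (ZR - ZL))
        / (M * (bL + bR)))
    (htauLs : tauLs = tauL + (M * bR * (vR - vL) + piL - piR - rbar * (ZR - ZL))
        / (aL * (bL + bR)))
    (htauRs : tauRs = tauR + (M * bL * (vR - vL) + piR - piL + rbar * (ZR - ZL))
        / (aR * (bL + bR)))
    (huLs : uLs = uL + bL * (M * bR * (vR - vL) + piL - piR - rbar * (ZR - ZL))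
        / (M * aL * (bL + bR)))
    (huRs : uRs = uR + bR * (M * bL * (vL - vR) + piL - piR - rbar * (ZR - ZL))
        / (M * aR * (bL + bR)))
    (hpiLs : piLs = (bR * piL + bL * piR + M * bL * bR * (vL - vR)
        + bL * rbar * (ZR - ZL)) / (bL + bR))
    (hpiRs : piRs = (bR * piL + bL * piR + M * bL * bR * (vL - vR)
        - bR * rbar * (ZR - ZL)) / (bL + bR))
    (heLs : eLs = eL + (piLs ^ 2 - piL ^ 2) / (2 * aL * bL)
        + ((vstar - uLs) ^ 2 - (vL - uL) ^ 2) / (2 * (aL / bL - 1)))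
    (heRs : eRs = eR + (piRs ^ 2 - piR ^ 2) / (2 * aR * bR)
        + ((vstar - uRs) ^ 2 - (vR - uR) ^ 2) / (2 * (aR / bR - 1)))
    (huL : uL = 0) (huR : uR = 0) (hvL : vL = 0) (hvR : vR = 0)
    (hpiL : piL = pL) (hpiR : piR = pR) (hZL : ZL = PhiL) (hZR : ZR = PhiR)
    (hhydro : pR - pL + rbar * (PhiR - PhiL) = 0) :
    vstar = 0 ∧ tauLs = tauL ∧ tauRs = tauR ∧ uLs = 0 ∧ uRs = 0 ∧
    piLs = pL ∧ piRs = pR ∧ eLs = eL ∧ eRs = eR := by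
  subst huL huR hvL hvR htauL htauR
  have hkey : piL - piR - rbar * (ZR - ZL) = 0 := by
    rw [hpiL, hpiR, hZL, hZR]; linarith
  have hb : bL + bR ≠ 0 := by positivity
  have h1 : vstar = 0 := by
    rw [hvstar]
    have : M * bL * 0 + M * bR * 0 + piL - piR - rbar * (ZR - ZL) = 0 := by linarith
    rw [this, zero_div]
  have h2 : tauLs = 1 / rhoL := by
    rw [htauLs]
    have : M * bR * (0 - 0) + piL - piR - rbar * (ZR - ZL) = 0 := by linarith
    rw [this, zero_div, add_zero]
  have h3 : tauRs = 1 / rhoR := by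
    rw [htauRs]
    have : M * bL * (0 - 0) + piR - piL + rbar * (ZR - ZL) = 0 := by linarith
    rw [this, zero_div, add_zero]
  have h4 : uLs = 0 := by
    rw [huLs]
    have : M * bR * (0 - 0) + piL - piR - rbar * (ZR - ZL) = 0 := by linarith
    rw [this, mul_zero, zero_div, add_zero]
  have h5 : uRs = 0 := by
    rw [huRs]
    have : M * bL * (0 - 0) + piL - piR - rbar * (ZR - ZL) = 0 := by linarith
    rw [this, mul_zero, zero_div, add_zero]
  have h6 : piLs = pL := by
    rw [hpiLs]
    rw [div_eq_iff hb]
    rw [hpiL, hpiR, hZL, hZR]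
    linear_combination bL * hhydro
  have h7 : piRs = pR := by
    rw [hpiRs]
    rw [div_eq_iff hb]
    rw [hpiL, hpiR, hZL, hZR]
    linear_combination (-bR) * hhydro
  have h8 : eLs = eL := by
    rw [heLs, h6, h1, h4, ← hpiL]; ring
  have h9 : eRs = eR := by
    rw [heRs, h7, h1, h5, ← hpiR]; ring
  exact ⟨h1, h2, h3, h4, h5, h6, h7, h8, h9⟩
end

section
/- (Exact well-balancing of isothermal equilibria, Lemma 7(i).) Let K > 0, C ∈ ℝ, and Φ^L, Φ^R ∈ ℝ. Define ρ^L = exp((C − Φ^L)/K), ρ^R = exp((C − Φ^R)/K), p^L = K·ρ^L, p^R = K·ρ^R, and let ρ̄ be the logarithmic mean: ρ̄ = (ρ^R − ρ^L)/(log ρ^R − log ρ^L) if ρ^L ≠ ρ^R and ρ̄ = ρ^L if ρ^L = ρ^R. Then the discrete hydrostatic condition holds: p^R − p^L + ρ̄·(Φ^R − Φ^L) = 0. -/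
/-- Exact well-balancing of isothermal equilibria (Lemma 7(i)): for the isothermal
hydrostatic states `ρ = exp((C − Φ)/K)`, `p = K·ρ` and the logarithmic mean `ρ̄`,
the discrete hydrostatic condition `p^R − p^L + ρ̄·(Φ^R − Φ^L) = 0` holds. -/
theorem wb_isothermal
    (K C PhiL PhiR rhoL rhoR pL pR rbar : ℝ)
    (hK : 0 < K)
    (hrhoL : rhoL = Real.exp ((C - PhiL) / K))
    (hrhoR : rhoR = Real.exp ((C - PhiR) / K))
    (hpL : pL = K * rhoL) (hpR : pR = K * rhoR)
    (hrbar : rbar = if rhoL ≠ rhoR then (rhoR - rhoL) / (Real.log rhoR - Real.log rhoL)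
        else rhoL) :
    pR - pL + rbar * (PhiR - PhiL) = 0 := by
  subst hpL hpR
  have hlogL : Real.log rhoL = (C - PhiL) / K := by rw [hrhoL, Real.log_exp]
  have hlogR : Real.log rhoR = (C - PhiR) / K := by rw [hrhoR, Real.log_exp]
  by_cases h : rhoL = rhoR
  · have hPhi : PhiL = PhiR := by
      have := hlogL.symm.trans (h ▸ hlogR)
      field_simp at this; linarith
    simp [hrbar, h, hPhi]
  · rw [hrbar, if_pos h]
    have hPhi : PhiR ≠ PhiL := by
      intro he; exact h (by rw [hrhoL, hrhoR, he])
    have hd : Real.log rhoR - Real.log rhoL = (PhiL - PhiR) / K := by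
      rw [hlogL, hlogR]; ring
    have hsub : PhiL - PhiR ≠ 0 := sub_ne_zero.mpr fun he => hPhi he.symm
    rw [hd]
    field_simp
    ring
end

section
/- (Exact well-balancing of polytropic equilibria, Lemma 7(iii).) Let Γ > 0 with Γ ≠ 1, K > 0, C ∈ ℝ, and ρ^L, ρ^R > 0 with ρ^L ≠ ρ^R. Define p^L = K·(ρ^L)^Γ, p^R = K·(ρ^R)^Γ, Φ^L = C − (Γ·K/(Γ − 1))·(ρ^L)^{Γ−1}, Φ^R = C − (Γ·K/(Γ − 1))·(ρ^R)^{Γ−1}, and ρ̄ = ((Γ − 1)/Γ)·((ρ^R)^Γ − (ρ^L)^Γ)/((ρ^R)^{Γ−1} − (ρ^L)^{Γ−1}). Then the discrete hydrostatic condition holds: p^R − p^L + ρ̄·(Φ^R − Φ^L) = 0. -/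
/-- Exact well-balancing of polytropic equilibria (Lemma 7(iii)): for the polytropic
hydrostatic states `p = K·ρ^Γ`, `Φ = C − (Γ·K/(Γ−1))·ρ^{Γ−1}` and the adapted average
`ρ̄ = ((Γ−1)/Γ)·((ρ^R)^Γ − (ρ^L)^Γ)/((ρ^R)^{Γ−1} − (ρ^L)^{Γ−1})`, the discrete
hydrostatic condition `p^R − p^L + ρ̄·(Φ^R − Φ^L) = 0` holds. -/
theorem wb_polytropic
    (Gamma K C rhoL rhoR pL pR PhiL PhiR rbar : ℝ)
    (hGamma : 0 < Gamma) (hGamma1 : Gamma ≠ 1) (hK : 0 < K)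
    (hrhoL : 0 < rhoL) (hrhoR : 0 < rhoR) (hne : rhoL ≠ rhoR)
    (hpL : pL = K * rhoL ^ Gamma) (hpR : pR = K * rhoR ^ Gamma)
    (hPhiL : PhiL = C - (Gamma * K / (Gamma - 1)) * rhoL ^ (Gamma - 1))
    (hPhiR : PhiR = C - (Gamma * K / (Gamma - 1)) * rhoR ^ (Gamma - 1))
    (hrbar : rbar = ((Gamma - 1) / Gamma) * (rhoR ^ Gamma - rhoL ^ Gamma)
        / (rhoR ^ (Gamma - 1) - rhoL ^ (Gamma - 1))) :
    pR - pL + rbar * (PhiR - PhiL) = 0 := by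
  have hG1 : Gamma - 1 ≠ 0 := sub_ne_zero.mpr hGamma1
  have hd : rhoR ^ (Gamma - 1) - rhoL ^ (Gamma - 1) ≠ 0 := by
    intro h
    exact hne ((Real.rpow_left_inj hrhoL.le hrhoR.le hG1).mp (by linarith))
  have hGne : Gamma ≠ 0 := hGamma.ne'
  subst hpL hpR hPhiL hPhiR hrbar
  field_simp
  ring
end

section
/- (Well-balancing of a-priori known hydrostatic equilibria, Lemma 8.) Assume u^L = u^R = 0, v^L = v^R = 0, π^L = p^L, π^R = p^R with p^L = p_hs^L, p^R = p_hs^R, ρ^L = ρ_hs^L, ρ^R = ρ_hs^R for given hydrostatic data ρ_hs^L, ρ_hs^R > 0 and p_hs^L, p_hs^R. Take the arithmetic mean ρ̄ = (ρ^L + ρ^R)/2 and replace the potential difference by Z^R − Z^L = −(p_hs^R − p_hs^L)/((ρ_hs^L + ρ_hs^R)/2). Then the intermediate states coincide with the adjacent initial states: v* = 0, τ^{L*} = τ^L, τ^{R*} = τ^R, u^{L*} = u^{R*} = 0, π^{L*} = p^L, π^{R*} = p^R, e^{L*} = e^L, e^{R*} = e^R; hence the approximate Riemann solver preserves the steady state.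 -/
/-- Well-balancing of a-priori known hydrostatic equilibria (Lemma 8): with zero
velocities, `π = p` given by known hydrostatic data, the arithmetic mean
`ρ̄ = (ρ^L + ρ^R)/2` and the potential difference replaced by
`Z^R − Z^L = −(p_hs^R − p_hs^L)/((ρ_hs^L + ρ_hs^R)/2)`, the intermediate states
coincide with the adjacent initial states, hence the approximate Riemann solver
preserves the steady state. -/
theorem wb_apriori_hydrostatic
    (M aL aR bL bR rhoL rhoR uL uR vL vR pL pR piL piR ZL ZR eL eR rbar : ℝ)
    (rhohsL rhohsR phsL phsR : ℝ)
    (hM : 0 < M) (haL : 0 < aL) (haR : 0 < aR) (hbL : 0 < bL) (hbR : 0 < bR)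
    (habL : aL > bL) (habR : aR > bR)
    (hrhoL : 0 < rhoL) (hrhoR : 0 < rhoR)
    (hrhohsL : 0 < rhohsL) (hrhohsR : 0 < rhohsR)
    (tauL tauR : ℝ) (htauL : tauL = 1 / rhoL) (htauR : tauR = 1 / rhoR)
    (vstar tauLs tauRs uLs uRs piLs piRs eLs eRs : ℝ)
    (hvstar : vstar = (M * bL * vL + M * bR * vR + piL - piR - rbar * (ZR - ZL))
        / (M * (bL + bR)))
    (htauLs : tauLs = tauL + (M * bR * (vR - vL) + piL - piR - rbar * (ZR - ZL))
        / (aL * (bL + bR)))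
    (htauRs : tauRs = tauR + (M * bL * (vR - vL) + piR - piL + rbar * (ZR - ZL))
        / (aR * (bL + bR)))
    (huLs : uLs = uL + bL * (M * bR * (vR - vL) + piL - piR - rbar * (ZR - ZL))
        / (M * aL * (bL + bR)))
    (huRs : uRs = uR + bR * (M * bL * (vL - vR) + piL - piR - rbar * (ZR - ZL))
        / (M * aR * (bL + bR)))
    (hpiLs : piLs = (bR * piL + bL * piR + M * bL * bR * (vL - vR)
        + bL * rbar * (ZR - ZL)) / (bL + bR))
    (hpiRs : piRs = (bR * piL + bL * piR + M * bL * bR * (vL - vR)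
        - bR * rbar * (ZR - ZL)) / (bL + bR))
    (heLs : eLs = eL + (piLs ^ 2 - piL ^ 2) / (2 * aL * bL)
        + ((vstar - uLs) ^ 2 - (vL - uL) ^ 2) / (2 * (aL / bL - 1)))
    (heRs : eRs = eR + (piRs ^ 2 - piR ^ 2) / (2 * aR * bR)
        + ((vstar - uRs) ^ 2 - (vR - uR) ^ 2) / (2 * (aR / bR - 1)))
    (huL : uL = 0) (huR : uR = 0) (hvL : vL = 0) (hvR : vR = 0)
    (hpiL : piL = pL) (hpiR : piR = pR)
    (hpLhs : pL = phsL) (hpRhs : pR = phsR)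
    (hrhoLhs : rhoL = rhohsL) (hrhoRhs : rhoR = rhohsR)
    (hrbar : rbar = (rhoL + rhoR) / 2)
    (hZdiff : ZR - ZL = -(phsR - phsL) / ((rhohsL + rhohsR) / 2)) :
    vstar = 0 ∧ tauLs = tauL ∧ tauRs = tauR ∧ uLs = 0 ∧ uRs = 0 ∧
    piLs = pL ∧ piRs = pR ∧ eLs = eL ∧ eRs = eR := by
  have hs : (0:ℝ) < rhohsL + rhohsR := by linarith
  have key : rbar * (ZR - ZL) = phsL - phsR := by
    rw [hrbar, hZdiff, hrhoLhs, hrhoRhs]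
    field_simp
    ring
  have hbLR : bL + bR ≠ 0 := by positivity
  have hvs : vstar = 0 := by
    rw [hvstar, key, hvL, hvR, hpiL, hpiR, hpLhs, hpRhs]; ring_nf
  have hpiLs' : piLs = pL := by
    rw [hpiLs, mul_assoc bL, key, hvL, hvR, hpiL, hpiR, hpLhs, hpRhs]
    field_simp; ring
  have hpiRs' : piRs = pR := by
    rw [hpiRs, mul_assoc bR, key, hvL, hvR, hpiL, hpiR, hpLhs, hpRhs]
    field_simp; ring
  have huLs' : uLs = 0 := by
    rw [huLs, key, hvL, hvR, hpiL, hpiR, hpLhs, hpRhs, huL]; ring_nf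
  have huRs' : uRs = 0 := by
    rw [huRs, key, hvL, hvR, hpiL, hpiR, hpLhs, hpRhs, huR]; ring_nf
  refine ⟨hvs, ?_, ?_, huLs', huRs', hpiLs', hpiRs', ?_, ?_⟩
  · rw [htauLs, key, hvL, hvR, hpiL, hpiR, hpLhs, hpRhs]; ring_nf
  · rw [htauRs, key, hvL, hvR, hpiL, hpiR, hpLhs, hpRhs]; ring_nf
  · rw [heLs, hpiLs', hvs, huLs', hvL, huL, hpiL]; ring_nf
  · rw [heRs, hpiRs', hvs, huRs', hvR, huR, hpiR]; ring_nf
end
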